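/- arXiv:0906.0385 — 4 statements merged into one kernel-verified Lean document; each statement's English description precedes it below -/
import Mathlib

section
/- For every integer i ≥ 1 and every number of variables n ≥ 1, all coefficients of the symmetric polynomial ∑_{j=0}^{i} e_j · h_{i−j} in ℤ[x_1,…,x_n] are even integers; equivalently, the polynomial P_i := (1/2)·∑_{j=0}^{i} e_j · h_{i−j}, a priori an element of ℚ[x_1,…,x_n], has all of its coefficients in ℤ (i.e., it lies in the image of the coefficient-inclusion map from MvPolynomial (Fin n) ℤ to MvPolynomial (Fin n) ℚ). -/
open MvPolynomial Finset

/-!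
Writing `e_j h_{i-j}` as a sum of products `x^A x^s` with `A` a `j`-subset and `s` a multiset
of size `i - j`, a monomial `x^m` of degree `i` arises once for every subset `A` of its support
(take `s = m - A`). Hence `∑_j e_j h_{i-j} = ∑_{|m| = i} 2^{|supp m|} x^m`, and for `i ≥ 1`
every support is nonempty.
-/

section

variable {σ M : Type*} [Fintype σ] [DecidableEq σ] [AddCommMonoid M]

theorem Sym.sum_add_eq_sum_filter_le (f : Multiset σ → M) {i : ℕ} (t : Multiset σ)
    (ht : Multiset.card t ≤ i) :
    ∑ s : Sym σ (i - Multiset.card t), f (t + s.1) = ∑ m : Sym σ i with t ≤ m.1, f m.1 := by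
  refine sum_bij' (fun s _ => ⟨t + s.1, by simp [ht]⟩)
    (fun m hm => ⟨m.1 - t, by rw [Multiset.card_sub (mem_filter.mp hm).2]; simp⟩)
    (fun s _ => mem_filter.mpr ⟨mem_univ _, Multiset.le_add_right _ _⟩) (fun _ _ => mem_univ _)
    (fun s _ => by ext : 1; simp)
    (fun m hm => by ext : 1; exact add_tsub_cancel_of_le (mem_filter.mp hm).2) (fun _ _ => rfl)

theorem Finset.filter_val_le_eq_powerset_toFinset (m : Multiset σ) :
    ({A : Finset σ | A.val ≤ m} : Finset _) = m.toFinset.powerset := by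
  ext A
  simp [Finset.val_le_iff_val_subset, Finset.subset_iff, Multiset.subset_iff]

end

variable {σ R : Type*} [Fintype σ] [DecidableEq σ] [CommSemiring R]

theorem esymm_mul_hsymm (j k : ℕ) :
    esymm σ R j * hsymm σ R k
      = ∑ A ∈ powersetCard j univ, ∑ s : Sym σ k, ((A.val + s.1).map X).prod := by
  rw [esymm, hsymm, sum_mul_sum]
  refine sum_congr rfl fun A _ => sum_congr rfl fun s _ => ?_
  rw [prod_eq_multiset_prod, ← Multiset.prod_add, Multiset.map_add]

theorem sum_range_esymm_mul_hsymm_eq_sum_sum_le (i : ℕ) :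
    ∑ j ∈ range (i + 1), esymm σ R j * hsymm σ R (i - j)
      = ∑ A : Finset σ, ∑ m : Sym σ i with A.val ≤ m.1, (m.1.map X).prod := by
  set g : Finset σ → MvPolynomial σ R := fun A =>
    ∑ m : Sym σ i with A.val ≤ m.1, (m.1.map X).prod
  have hg : ∀ A : Finset σ, A.card ∉ range (i + 1) → g A = 0 := by
    intro A hA
    refine sum_eq_zero fun m hm => absurd ?_ hA
    simpa [Nat.lt_succ_iff] using Multiset.card_le_card (mem_filter.mp hm).2
  calc ∑ j ∈ range (i + 1), esymm σ R j * hsymm σ R (i - j)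
      = ∑ j ∈ range (i + 1), ∑ A : Finset σ with A.card = j, g A := by
        refine sum_congr rfl fun j hj => ?_
        rw [esymm_mul_hsymm, powersetCard_eq_filter, powerset_univ]
        refine sum_congr rfl fun A hA => ?_
        obtain rfl : A.card = j := (mem_filter.mp hA).2
        exact Sym.sum_add_eq_sum_filter_le (fun t => (t.map X).prod) A.val
          (by simpa [Nat.lt_succ_iff] using hj)
    _ = ∑ A : Finset σ with A.card ∈ range (i + 1), g A :=
        sum_fiberwise_eq_sum_filter _ _ card g
    _ = ∑ A : Finset σ, g A := sum_filter_of_ne fun A _ hA => by_contra fun h => hA (hg A h)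

theorem sum_range_esymm_mul_hsymm (i : ℕ) :
    ∑ j ∈ range (i + 1), esymm σ R j * hsymm σ R (i - j)
      = ∑ m : Sym σ i, 2 ^ m.1.toFinset.card • (m.1.map X).prod := by
  rw [sum_range_esymm_mul_hsymm_eq_sum_sum_le,
    sum_comm' (t' := univ) (s' := fun m => {A | A.val ≤ m.1}) fun _ _ => by
      simp only [mem_filter, mem_univ, true_and, and_true]]
  refine sum_congr rfl fun m _ => ?_
  rw [sum_const, Finset.filter_val_le_eq_powerset_toFinset, card_powerset]

theorem two_dvd_sum_range_esymm_mul_hsymm {i : ℕ} (hi : 1 ≤ i) :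
    (2 : MvPolynomial σ R) ∣ ∑ j ∈ range (i + 1), esymm σ R j * hsymm σ R (i - j) := by
  rw [sum_range_esymm_mul_hsymm]
  refine dvd_sum fun m _ => ?_
  have hm : m.1.toFinset.card ≠ 0 := by
    simpa [← Multiset.card_eq_zero, m.2] using (by omega : i ≠ 0)
  rw [nsmul_eq_mul, Nat.cast_pow, Nat.cast_ofNat]
  exact (dvd_pow_self 2 hm).mul_right _

theorem stmt_0_general (i n : ℕ) (hi : 1 ≤ i) :
    (∀ d : Fin n →₀ ℕ,
      (2 : ℤ) ∣ MvPolynomial.coeff d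
        (∑ j ∈ Finset.range (i + 1),
          esymm (Fin n) ℤ j * hsymm (Fin n) ℤ (i - j))) ∧
    (C (1/2 : ℚ) * ∑ j ∈ Finset.range (i + 1),
        esymm (Fin n) ℚ j * hsymm (Fin n) ℚ (i - j)) ∈
      Set.range (MvPolynomial.map (Int.castRingHom ℚ)) := by
  obtain ⟨Q, hQ⟩ := two_dvd_sum_range_esymm_mul_hsymm (σ := Fin n) (R := ℤ) hi
  refine ⟨fun d => ?_, Q, ?_⟩
  · rw [← map_ofNat C 2] at hQ
    exact (C_dvd_iff_dvd_coeff _ _).mp ⟨Q, hQ⟩ d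
  · have hmap : ∑ j ∈ range (i + 1), esymm (Fin n) ℚ j * hsymm (Fin n) ℚ (i - j)
        = map (Int.castRingHom ℚ)
            (∑ j ∈ range (i + 1), esymm (Fin n) ℤ j * hsymm (Fin n) ℤ (i - j)) := by
      simp only [map_sum, map_mul, map_esymm, map_hsymm]
    rw [hmap, hQ, map_mul, map_ofNat, ← mul_assoc, ← map_ofNat C 2, ← C_mul]
    norm_num

/-- For every integer `i ≥ 1` and every number of variables `n ≥ 1`, all coefficients of the
symmetric polynomial `∑_{j=0}^{i} e_j * h_{i-j}` in `ℤ[x_1,…,x_n]` are even; equivalently, the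
polynomial `P_i = (1/2) * ∑_{j=0}^{i} e_j * h_{i-j}` in `ℚ[x_1,…,x_n]` lies in the image of the
coefficient inclusion `MvPolynomial (Fin n) ℤ → MvPolynomial (Fin n) ℚ`. -/
theorem stmt_0 (i n : ℕ) (hi : 1 ≤ i) (hn : 1 ≤ n) :
    (∀ d : Fin n →₀ ℕ,
      (2 : ℤ) ∣ MvPolynomial.coeff d
        (∑ j ∈ Finset.range (i + 1),
          esymm (Fin n) ℤ j * hsymm (Fin n) ℤ (i - j))) ∧
    (C (1/2 : ℚ) * ∑ j ∈ Finset.range (i + 1),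
        esymm (Fin n) ℚ j * hsymm (Fin n) ℚ (i - j)) ∈
      Set.range (MvPolynomial.map (Int.castRingHom ℚ)) :=
  stmt_0_general i n hi
end

section
/- For every integer j ≥ 1 and every number of variables n ≥ 1, the element e_j − ((−1)^{j−1}/j)·p_j of MvPolynomial (Fin n) ℚ lies in the ℚ-subalgebra Algebra.adjoin ℚ {p_1, p_2, …, p_{j−1}} generated by the power sums of degree strictly less than j. (That is, when e_j is expressed as a polynomial in the power sum symmetric functions, p_j occurs with coefficient exactly (−1)^{j−1}/j.) -/
/-!
Newton's identity `k e_k = (-1)^(k-1) p_k + ∑_{0<i<k} (-1)^(k-1+i) e_i p_{k-i}` isolates the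
`p_k` term of `e_k`; every other term is a product `e_i p_{k-i}` with `0 < i, k - i < k`, and by
strong induction each such `e_i` is itself a polynomial in `p_1, …, p_i`.
-/

open MvPolynomial Finset

namespace MvPolynomial

variable (σ R : Type*) [Fintype σ] [Field R]

noncomputable def adjoinPsumBelow (j : ℕ) : Subalgebra R (MvPolynomial σ R) :=
  Algebra.adjoin R {q | ∃ k, 1 ≤ k ∧ k < j ∧ q = psum σ R k}

variable {σ R}

theorem adjoinPsumBelow_mono {i j : ℕ} (hij : i ≤ j) :
    adjoinPsumBelow σ R i ≤ adjoinPsumBelow σ R j :=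
  Algebra.adjoin_mono fun _ ⟨k, hk1, hki, hq⟩ => ⟨k, hk1, hki.trans_le hij, hq⟩

theorem psum_mem_adjoinPsumBelow {k j : ℕ} (hk : 1 ≤ k) (hkj : k < j) :
    psum σ R k ∈ adjoinPsumBelow σ R j :=
  Algebra.subset_adjoin ⟨k, hk, hkj, rfl⟩

theorem esymm_sub_psum_eq_sum [CharZero R] {k : ℕ} (hk : 0 < k) :
    esymm σ R k - C ((-1 : R) ^ (k - 1) / k) * psum σ R k =
      C ((-1 : R) ^ (k - 1) / k) *
        ∑ a ∈ antidiagonal k with a.1 ∈ Set.Ioo 0 k,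
          (-1) ^ a.1 * esymm σ R a.1 * psum σ R a.2 := by
  have hc : (C ((-1 : R) ^ (k - 1) / k) : MvPolynomial σ R) * ((-1) ^ (k + 1) * k) = 1 := by
    have hk' : (k : R) ≠ 0 := Nat.cast_ne_zero.mpr hk.ne'
    rw [← map_one C, ← map_natCast C, ← map_neg C, ← map_pow, ← map_mul, ← map_mul]
    congr 1
    obtain ⟨m, rfl⟩ := Nat.exists_eq_add_one_of_ne_zero hk.ne'
    rw [Nat.add_sub_cancel]
    field_simp
    rw [← pow_add, show m + (m + 1 + 1) = 2 * (m + 1) by ring, pow_mul]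
    simp
  rw [psum_eq_mul_esymm_sub_sum σ R k hk]
  linear_combination (-esymm σ R k) * hc

theorem esymm_sub_psum_mem_adjoinPsumBelow [CharZero R] {j : ℕ} (hj : 0 < j) :
    esymm σ R j - C ((-1 : R) ^ (j - 1) / j) * psum σ R j ∈ adjoinPsumBelow σ R j := by
  induction j using Nat.strong_induction_on with
  | _ j ih =>
  set A := adjoinPsumBelow σ R j
  have esymm_mem {i : ℕ} (hi : 0 < i) (hij : i < j) : esymm σ R i ∈ A := by
    have hsub := adjoinPsumBelow_mono hij.le (ih i hij hi)
    have hp := A.mul_mem (A.algebraMap_mem ((-1 : R) ^ (i - 1) / i))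
      (psum_mem_adjoinPsumBelow (σ := σ) hi hij)
    simpa using A.add_mem hsub hp
  rw [esymm_sub_psum_eq_sum hj]
  refine A.mul_mem (A.algebraMap_mem _) (A.sum_mem fun a ha => ?_)
  simp only [mem_filter, HasAntidiagonal.mem_antidiagonal, Set.mem_Ioo] at ha
  obtain ⟨hsum, hpos, hlt⟩ := ha
  refine A.mul_mem (A.mul_mem (A.pow_mem (A.neg_mem A.one_mem) _) (esymm_mem hpos hlt)) ?_
  exact psum_mem_adjoinPsumBelow (by omega) (by omega)

end MvPolynomial

theorem stmt_2_general (j n : ℕ) (hj : 1 ≤ j) :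
    esymm (Fin n) ℚ j - C ((-1 : ℚ) ^ (j - 1) / (j : ℚ)) * psum (Fin n) ℚ j ∈
      Algebra.adjoin ℚ
        {q : MvPolynomial (Fin n) ℚ | ∃ k, 1 ≤ k ∧ k < j ∧ q = psum (Fin n) ℚ k} :=
  esymm_sub_psum_mem_adjoinPsumBelow hj

/-- For every `j ≥ 1` and `n ≥ 1`, the element `e_j - ((-1)^(j-1)/j) * p_j` of
`MvPolynomial (Fin n) ℚ` lies in the `ℚ`-subalgebra generated by the power sums
`p_1, …, p_{j-1}` of degree strictly less than `j`. -/
theorem stmt_2 (j n : ℕ) (hj : 1 ≤ j) (hn : 1 ≤ n) :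
    esymm (Fin n) ℚ j - C ((-1 : ℚ) ^ (j - 1) / (j : ℚ)) * psum (Fin n) ℚ j ∈
      Algebra.adjoin ℚ
        {q : MvPolynomial (Fin n) ℚ | ∃ k, 1 ≤ k ∧ k < j ∧ q = psum (Fin n) ℚ k} :=
  stmt_2_general j n hj
end

section
/- For every odd integer i ≥ 1 and every number of variables n ≥ 1, the element P_i − (1/i)·p_i of MvPolynomial (Fin n) ℚ lies in the ℚ-subalgebra Algebra.adjoin ℚ {p_k : k odd, 1 ≤ k < i} generated by the odd-indexed power sums of degree strictly less than i. (That is, for odd i, the coefficient of p_i in the expansion of P_i as a polynomial in odd power sum symmetric functions is exactly 1/i.) -/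
/-!
The series `Q(t) = ∏ₐ (1 + xₐ t) / (1 - xₐ t) = E(t) H(t)` has coefficients `Q_m = 2 P_m`, and
its logarithmic derivative is `t Q'(t) / Q(t) = 2 ∑_{k odd} p_k t^k`, i.e.
`m Q_m = 2 ∑_{k odd, k ≤ m} p_k Q_{m-k}`. By strong induction every `Q_m` with `m < i` lies in
the algebra generated by the odd `p_k` with `k < i`. For odd `i` the term `k = i` of the
recurrence is `2 p_i Q_0 = 2 p_i`, so `Q_i - (2 / i) p_i` lies in that algebra as well.
-/

open MvPolynomial Finset

open scoped PowerSeries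

theorem Derivation.map_prod_of_map_eq_mul {R A ι : Type*} [CommSemiring R] [CommSemiring A]
    [Algebra R A] (D : Derivation R A A) (s : Finset ι) (f g : ι → A)
    (h : ∀ i ∈ s, D (f i) = f i * g i) :
    D (∏ i ∈ s, f i) = (∏ i ∈ s, f i) * ∑ i ∈ s, g i := by
  induction s using Finset.cons_induction with
  | empty => simp
  | cons a s ha ih =>
    rw [prod_cons, sum_cons, D.leibniz, smul_eq_mul, smul_eq_mul, h a (mem_cons_self a s),
      ih fun i hi => h i (mem_cons_of_mem hi)]
    ring

namespace SchurP

variable {R : Type*} [CommRing R]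

noncomputable def geomSeries (r : R) : PowerSeries R := PowerSeries.mk (r ^ ·)

@[simp]
theorem coeff_geomSeries (r : R) (n : ℕ) : PowerSeries.coeff n (geomSeries r) = r ^ n :=
  PowerSeries.coeff_mk _ _

theorem one_sub_C_mul_X_mul_geomSeries (r : R) :
    (1 - PowerSeries.C r * PowerSeries.X) * geomSeries r = 1 := by
  have h := congrArg (PowerSeries.rescale r) (PowerSeries.mk_one_mul_one_sub_eq_one R)
  rw [map_mul, map_sub, map_one, PowerSeries.rescale_X, PowerSeries.rescale_mk] at h
  simpa [geomSeries, mul_comm] using h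

theorem one_add_C_mul_X_mul_geomSeries_neg (r : R) :
    (1 + PowerSeries.C r * PowerSeries.X) * geomSeries (-r) = 1 := by
  simpa using one_sub_C_mul_X_mul_geomSeries (-r)

theorem derivative_geomSeries (r : R) :
    d⁄dX R (geomSeries r) = PowerSeries.C r * geomSeries r ^ 2 := by
  set g := geomSeries r
  have hg := one_sub_C_mul_X_mul_geomSeries r
  have hdg : (1 - PowerSeries.C r * PowerSeries.X) * d⁄dX R g = PowerSeries.C r * g := by
    have := congrArg (d⁄dX R) hg
    simp only [Derivation.leibniz, smul_eq_mul, map_sub, Derivation.map_one_eq_zero,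
      PowerSeries.derivative_X, PowerSeries.derivative_C] at this
    linear_combination this
  calc d⁄dX R g = ((1 - PowerSeries.C r * PowerSeries.X) * g) * d⁄dX R g := by rw [hg, one_mul]
    _ = PowerSeries.C r * g ^ 2 := by linear_combination g * hdg

variable {σ : Type*} [Fintype σ]

theorem coeff_prod_one_add_C_X_mul_X (d : ℕ) :
    PowerSeries.coeff d (∏ a : σ, (1 + PowerSeries.C (X a : MvPolynomial σ R) * PowerSeries.X)) =
      esymm σ R d := by
  simp only [prod_one_add, prod_mul_distrib, prod_const, ← map_prod, map_sum,
    PowerSeries.coeff_C_mul_X_pow, esymm, powersetCard_eq_filter, sum_filter, eq_comm]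

theorem coeff_prod_geomSeries [DecidableEq σ] (d : ℕ) :
    PowerSeries.coeff d (∏ a : σ, geomSeries (X a : MvPolynomial σ R)) = hsymm σ R d := by
  have : Fintype {P : σ →₀ ℕ // P.sum (fun _ ↦ id) = d} :=
    Fintype.ofEquiv _ (Sym.equivNatSum σ d)
  rw [PowerSeries.coeff_prod, hsymm, sum_subtype (p := fun P : σ →₀ ℕ => P.sum (fun _ ↦ id) = d),
    ← (Sym.equivNatSum σ d).symm.sum_comp]
  · refine sum_congr rfl fun P _ => ?_
    change _ = (P.1.toMultiset.map X).prod
    rw [Finset.prod_multiset_map_count, Finsupp.toFinset_toMultiset]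
    simp only [coeff_geomSeries, Finsupp.count_toMultiset]
    exact (Finsupp.prod_fintype _ _ fun _ => pow_zero _).symm
  · intro P
    simp [mem_finsuppAntidiag, Finsupp.sum_fintype]

/-- `∏ₐ (1 + xₐ t) / (1 - xₐ t)`, the generating function of the Schur `Q`-functions
`Q_m = 2 P_m`. -/
noncomputable def schurQSeries (σ R : Type*) [Fintype σ] [CommRing R] : (MvPolynomial σ R)⟦X⟧ :=
  ∏ a : σ, (1 + PowerSeries.C (X a) * PowerSeries.X) * geomSeries (X a)

theorem coeff_schurQSeries [DecidableEq σ] (m : ℕ) :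
    PowerSeries.coeff m (schurQSeries σ R) =
      ∑ j ∈ range (m + 1), esymm σ R j * hsymm σ R (m - j) := by
  rw [schurQSeries, prod_mul_distrib, PowerSeries.coeff_mul,
    Nat.sum_antidiagonal_eq_sum_range_succ_mk]
  simp only [coeff_prod_one_add_C_X_mul_X, coeff_prod_geomSeries]

theorem coeff_zero_schurQSeries : PowerSeries.coeff 0 (schurQSeries σ R) = 1 := by
  classical
  simp [coeff_schurQSeries]

theorem derivative_one_add_C_mul_X_mul_geomSeries (r : R) :
    d⁄dX R ((1 + PowerSeries.C r * PowerSeries.X) * geomSeries r) =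
      (1 + PowerSeries.C r * PowerSeries.X) * geomSeries r *
        (PowerSeries.C r * (geomSeries r + geomSeries (-r))) := by
  simp only [Derivation.leibniz, derivative_geomSeries, smul_eq_mul, map_add,
    Derivation.map_one_eq_zero, PowerSeries.derivative_C, PowerSeries.derivative_X]
  linear_combination (-PowerSeries.C r * geomSeries r) * one_add_C_mul_X_mul_geomSeries_neg r

theorem derivative_schurQSeries :
    d⁄dX (MvPolynomial σ R) (schurQSeries σ R) = schurQSeries σ R *
      ∑ a : σ, PowerSeries.C (X a) * (geomSeries (X a) + geomSeries (-X a)) :=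
  Derivation.map_prod_of_map_eq_mul _ _ _ _ fun a _ =>
    derivative_one_add_C_mul_X_mul_geomSeries (X a)

theorem coeff_sum_C_mul_geomSeries_add_geomSeries_neg (k : ℕ) :
    PowerSeries.coeff k
        (∑ a : σ, PowerSeries.C (X a : MvPolynomial σ R) * (geomSeries (X a) + geomSeries (-X a))) =
      (1 + (-1) ^ k) * psum σ R (k + 1) := by
  simp only [map_sum, PowerSeries.coeff_C_mul, map_add, coeff_geomSeries, psum, mul_sum]
  exact sum_congr rfl fun a _ => by rw [neg_pow]; ring

/-- The logarithmic derivative `t Q'(t) / Q(t) = 2 ∑_{k odd} p_k t^k`, read off coefficientwise. -/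
theorem succ_nsmul_coeff_schurQSeries (m : ℕ) :
    (m + 1) • PowerSeries.coeff (m + 1) (schurQSeries σ R) =
      ∑ p ∈ antidiagonal m,
        PowerSeries.coeff p.1 (schurQSeries σ R) * ((1 + (-1) ^ p.2) * psum σ R (p.2 + 1)) := by
  have h := congrArg (PowerSeries.coeff m) (derivative_schurQSeries (σ := σ) (R := R))
  rw [PowerSeries.coeff_derivative, PowerSeries.coeff_mul] at h
  simp only [coeff_sum_C_mul_geomSeries_add_geomSeries_neg] at h
  rw [nsmul_eq_mul, mul_comm, ← h]
  push_cast
  rfl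

section OddPowerSums

variable {K : Type*} [Field K]

variable (σ K) in
noncomputable def oddPsumSubalgebra (i : ℕ) : Subalgebra K (MvPolynomial σ K) :=
  Algebra.adjoin K {q | ∃ k, Odd k ∧ 1 ≤ k ∧ k < i ∧ q = psum σ K k}

theorem psum_mem_oddPsumSubalgebra {i k : ℕ} (hk : Odd k) (hki : k < i) :
    psum σ K k ∈ oddPsumSubalgebra σ K i :=
  Algebra.subset_adjoin ⟨k, hk, hk.pos, hki, rfl⟩

theorem mul_one_add_neg_one_pow_mul_psum_mem {i k : ℕ} {q : MvPolynomial σ K}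
    (hq : q ∈ oddPsumSubalgebra σ K i) (hki : k + 1 < i) :
    q * ((1 + (-1) ^ k) * psum σ K (k + 1)) ∈ oddPsumSubalgebra σ K i := by
  rcases Nat.even_or_odd k with hk | hk
  · rw [hk.neg_one_pow]
    exact mul_mem hq (mul_mem (add_mem (one_mem _) (one_mem _))
      (psum_mem_oddPsumSubalgebra hk.add_one hki))
  · rw [hk.neg_one_pow, add_neg_cancel, zero_mul, mul_zero]
    exact zero_mem _

theorem coeff_schurQSeries_mem [CharZero K] {i m : ℕ} (hm : m < i) :
    PowerSeries.coeff m (schurQSeries σ K) ∈ oddPsumSubalgebra σ K i := by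
  induction m using Nat.strong_induction_on with
  | _ m ih =>
    cases m with
    | zero => exact coeff_zero_schurQSeries (σ := σ) (R := K) ▸ one_mem _
    | succ m =>
      have h := succ_nsmul_coeff_schurQSeries (σ := σ) (R := K) m
      rw [← Nat.cast_smul_eq_nsmul K] at h
      have hmem : ((m + 1 : ℕ) : K) • PowerSeries.coeff (m + 1) (schurQSeries σ K) ∈
          oddPsumSubalgebra σ K i :=
        h ▸ sum_mem fun p hp => by
          have hp := mem_antidiagonal.mp hp
          exact mul_one_add_neg_one_pow_mul_psum_mem (ih p.1 (by omega) (by omega)) (by omega)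
      simpa only [inv_smul_smul₀ ((Nat.cast_ne_zero (R := K)).mpr m.succ_ne_zero)] using
        Subalgebra.smul_mem _ hmem ((m + 1 : ℕ) : K)⁻¹

theorem coeff_schurQSeries_sub_smul_psum_mem [CharZero K] {i : ℕ} (hi : Odd i) :
    PowerSeries.coeff i (schurQSeries σ K) - (2 / i : K) • psum σ K i ∈
      oddPsumSubalgebra σ K i := by
  obtain ⟨m, rfl⟩ : ∃ m, i = m + 1 := ⟨i - 1, by have := hi.pos; omega⟩
  have hm : Even m := by simpa [Nat.odd_add_one] using hi
  have h := succ_nsmul_coeff_schurQSeries (σ := σ) (R := K) m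
  have h0m : ((0, m) : ℕ × ℕ) ∈ antidiagonal m := by simp
  rw [← Nat.cast_smul_eq_nsmul K, ← add_sum_erase _ _ h0m, coeff_zero_schurQSeries,
    hm.neg_one_pow] at h
  set rest := ∑ p ∈ (antidiagonal m).erase (0, m), PowerSeries.coeff p.1 (schurQSeries σ K) *
    ((1 + (-1) ^ p.2) * psum σ K (p.2 + 1))
  have hrest : rest ∈ oddPsumSubalgebra σ K (m + 1) := sum_mem fun p hp => by
    have hp' := mem_antidiagonal.mp (mem_of_mem_erase hp)
    have hp1 : p.1 ≠ 0 := fun h0 => ne_of_mem_erase hp (Prod.ext h0 (by dsimp only; omega))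
    exact mul_one_add_neg_one_pow_mul_psum_mem (coeff_schurQSeries_mem (by omega)) (by omega)
  rw [one_mul, one_add_one_eq_two, two_mul,
    ← eq_inv_smul_iff₀ ((Nat.cast_ne_zero (R := K)).mpr m.succ_ne_zero)] at h
  rw [h]
  convert Subalgebra.smul_mem _ hrest ((m + 1 : ℕ) : K)⁻¹ using 1
  push_cast
  module

end OddPowerSums

end SchurP

theorem stmt_4_general (i n : ℕ) (hodd : Odd i) :
    (C (1/2 : ℚ) * ∑ j ∈ Finset.range (i + 1),
        esymm (Fin n) ℚ j * hsymm (Fin n) ℚ (i - j))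
      - C (1 / (i : ℚ)) * psum (Fin n) ℚ i ∈
      Algebra.adjoin ℚ
        {q : MvPolynomial (Fin n) ℚ |
          ∃ k, Odd k ∧ 1 ≤ k ∧ k < i ∧ q = psum (Fin n) ℚ k} := by
  have h := Subalgebra.smul_mem _
    (SchurP.coeff_schurQSeries_sub_smul_psum_mem (σ := Fin n) hodd) (1 / 2 : ℚ)
  rw [SchurP.coeff_schurQSeries] at h
  change _ ∈ SchurP.oddPsumSubalgebra (Fin n) ℚ i
  convert h using 1
  simp only [← smul_eq_C_mul]
  module

/-- For every odd `i ≥ 1` and every `n ≥ 1`, the element `P_i - (1/i) * p_i`, where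
`P_i = (1/2) * ∑_{j=0}^{i} e_j * h_{i-j}`, lies in the `ℚ`-subalgebra of
`MvPolynomial (Fin n) ℚ` generated by the odd power sums `p_k`, `k` odd, `1 ≤ k < i`. -/
theorem stmt_4 (i n : ℕ) (hi : 1 ≤ i) (hodd : Odd i) (hn : 1 ≤ n) :
    (C (1/2 : ℚ) * ∑ j ∈ Finset.range (i + 1),
        esymm (Fin n) ℚ j * hsymm (Fin n) ℚ (i - j))
      - C (1 / (i : ℚ)) * psum (Fin n) ℚ i ∈
      Algebra.adjoin ℚ
        {q : MvPolynomial (Fin n) ℚ |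
          ∃ k, Odd k ∧ 1 ≤ k ∧ k < i ∧ q = psum (Fin n) ℚ k} :=
  stmt_4_general i n hodd
end

section
/- For every integer m ≥ 1 and every number of variables n ≥ 1, the ℚ-subalgebra of MvPolynomial (Fin n) ℚ generated by the one-row Schur P-functions P_1, P_3, P_5, …, P_{2m−1} equals the ℚ-subalgebra generated by the odd power sums p_1, p_3, p_5, …, p_{2m−1}; that is, Algebra.adjoin ℚ {P_1, P_3, …, P_{2m−1}} = Algebra.adjoin ℚ {p_1, p_3, …, p_{2m−1}}. -/
/-!
Put `Q(t) = ∏ᵢ (1 + xᵢ t) / (1 - xᵢ t) = ∑ₖ Qₖ tᵏ`, so that `Qₖ = ∑ⱼ eⱼ h_{k-j} = 2 Pₖ` for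
`k ≥ 1`. Two identities of formal power series carry the whole argument.

* `Q(t) Q(-t) = 1`. In even degree `k > 0` it reads `2 Qₖ = -∑_{0<i<k} (-1)ⁱ Qᵢ Q_{k-i}`, so the
  even `Qₖ` are polynomials in the odd ones.
* `Q'(t) = Q(t) ∑ᵢ 2xᵢ / (1 - xᵢ² t²)`, i.e. `(k + 1) Q_{k+1} = 2 ∑ Qᵢ p_{k-i+1}`, the sum over
  the `i ≤ k` with `k - i` even. This relation is triangular in both directions: it expresses
  `Q_{k+1}` through the `Qᵢ`, `i ≤ k`, and odd power sums of degree at most `k + 1`, and it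
  expresses `p_{k+1}` (for even `k`) through `Q₀, …, Q_{k+1}` and odd power sums of lower degree.
-/

open MvPolynomial Finset
open PowerSeries hiding C

theorem Derivation.leibniz_prod_of_eq_mul {R A ι : Type*} [CommSemiring R] [CommSemiring A]
    [Algebra R A] (D : Derivation R A A) (s : Finset ι) {f g : ι → A}
    (h : ∀ i ∈ s, D (f i) = f i * g i) :
    D (∏ i ∈ s, f i) = (∏ i ∈ s, f i) * ∑ i ∈ s, g i := by
  classical
  induction s using Finset.induction_on with
  | empty => simp
  | insert a s ha ih =>
    rw [prod_insert ha, sum_insert ha, Derivation.leibniz, smul_eq_mul, smul_eq_mul,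
      h a (mem_insert_self a s), ih fun i hi => h i (mem_insert_of_mem hi)]
    ring

theorem Subalgebra.mem_of_natCast_mul_mem {K A : Type*} [Field K] [CharZero K] [Ring A]
    [Algebra K A] (S : Subalgebra K A) {n : ℕ} (hn : n ≠ 0) {x : A} (h : (n : A) * x ∈ S) :
    x ∈ S := by
  have hx : x = (n : K)⁻¹ • ((n : A) * x) := by
    rw [Algebra.smul_def, ← mul_assoc, ← map_natCast (algebraMap K A), ← map_mul,
      inv_mul_cancel₀ (Nat.cast_ne_zero.2 hn), map_one, one_mul]
  rw [hx]
  exact S.smul_mem h _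

theorem MvPolynomial.hsymm_eq_sum_finsuppAntidiag {σ R : Type*} [Fintype σ] [DecidableEq σ]
    [CommSemiring R] (k : ℕ) :
    hsymm σ R k = ∑ l ∈ univ.finsuppAntidiag k, ∏ i, X i ^ l i := by
  have sum_eq (l : σ →₀ ℕ) : (l.sum fun _ => id) = ∑ i, l i := Finsupp.sum_fintype _ _ (by simp)
  refine sum_bij' (fun s _ => (Sym.equivNatSum σ k s).1)
    (fun l hl => (Sym.equivNatSum σ k).symm
      ⟨l, by rw [sum_eq]; exact (mem_finsuppAntidiag.1 hl).1⟩)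
    (fun s _ => ?_) (fun _ _ => mem_univ _) (fun s _ => by simp) (fun l _ => by simp)
    (fun s _ => ?_)
  · rw [mem_finsuppAntidiag, ← sum_eq]
    exact ⟨(Sym.equivNatSum σ k s).2, subset_univ _⟩
  · rw [prod_multiset_map_count]
    refine prod_subset (subset_univ _) fun i _ hi => ?_
    simp_all

namespace PowerSeries

variable {A : Type*} [CommRing A]

theorem coeff_prod_one_add_C_mul_X {ι : Type*} (s : Finset ι) (a : ι → A) (k : ℕ) :
    coeff k (∏ i ∈ s, (1 + PowerSeries.C (a i) * X)) =
      ∑ t ∈ s.powersetCard k, ∏ i ∈ t, a i := by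
  simp_rw [prod_one_add, prod_mul_distrib, prod_const, ← map_prod, map_sum, coeff_C_mul_X_pow,
    sum_ite, sum_const_zero, add_zero, powersetCard_eq_filter, eq_comm (a := k)]

theorem derivative_rescale (a : A) (f : A⟦X⟧) :
    d⁄dX A (rescale a f) = PowerSeries.C a * rescale a (d⁄dX A f) := by
  ext n
  simp only [coeff_derivative, coeff_rescale, PowerSeries.coeff_C_mul, pow_succ]
  ring

theorem one_sub_X_mul_mk_one : (1 - X) * mk (1 : ℕ → A) = 1 := by
  rw [mul_comm, mk_one_mul_one_sub_eq_one]

theorem derivative_mk_one : d⁄dX A (mk 1) = mk 1 * mk 1 := by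
  have h := congrArg (d⁄dX A) (one_sub_X_mul_mk_one (A := A))
  rw [Derivation.leibniz, map_sub, derivative_X, Derivation.map_one_eq_zero, smul_eq_mul,
    smul_eq_mul] at h
  linear_combination mk 1 * h - d⁄dX A (mk 1) * (one_sub_X_mul_mk_one (A := A))

/-- `(1 + X) / (1 - X)` -/
noncomputable def schurQFactor : A⟦X⟧ := (1 + X) * mk 1

/-- `2 / (1 - X²)` -/
noncomputable def logDerivSchurQFactor : A⟦X⟧ := mk fun k => if Even k then 2 else 0

theorem one_add_X_mul_logDerivSchurQFactor :
    (1 + X) * logDerivSchurQFactor = (2 : A⟦X⟧) * mk 1 := by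
  ext k
  rcases k with _ | k
  · simp [logDerivSchurQFactor, coeff_zero_eq_constantCoeff_apply]
    exact (map_ofNat _ 2).symm
  · rw [add_mul, one_mul, map_add, coeff_succ_X_mul]
    simp only [logDerivSchurQFactor, coeff_mk, Nat.even_add_one]
    rw [← map_ofNat (PowerSeries.C (R := A)) 2, PowerSeries.coeff_C_mul, coeff_mk, Pi.one_apply,
      mul_one]
    split_ifs <;> simp

theorem derivative_schurQFactor :
    d⁄dX A schurQFactor = schurQFactor * logDerivSchurQFactor := by
  rw [schurQFactor, Derivation.leibniz, smul_eq_mul, smul_eq_mul, derivative_mk_one, map_add,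
    derivative_X, Derivation.map_one_eq_zero, zero_add]
  linear_combination (-mk 1) * (one_sub_X_mul_mk_one (A := A)) -
    mk 1 * (one_add_X_mul_logDerivSchurQFactor (A := A))

theorem schurQFactor_mul_rescale_neg_one :
    schurQFactor * rescale (-1) schurQFactor = (1 : A⟦X⟧) := by
  have h := congrArg (rescale (-1)) (one_sub_X_mul_mk_one (A := A))
  rw [map_mul, map_sub, map_one, rescale_X, map_neg, map_one, neg_one_mul, sub_neg_eq_add] at h
  rw [schurQFactor, map_mul, map_add, map_one, rescale_X, map_neg, map_one, neg_one_mul,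
    ← sub_eq_add_neg]
  linear_combination (1 + X) * rescale (-1) (mk 1) * (one_sub_X_mul_mk_one (A := A)) + h

end PowerSeries

namespace MvPolynomial

section Series

variable (σ R : Type*) [Fintype σ] [CommRing R]

/-- `∏ᵢ (1 + xᵢ t) / (1 - xᵢ t)` -/
noncomputable def schurQSeries : (MvPolynomial σ R)⟦X⟧ := ∏ i, rescale (X i) schurQFactor

variable {σ R}

theorem schurQSeries_mul_rescale_neg_one :
    schurQSeries σ R * rescale (-1) (schurQSeries σ R) = 1 := by
  rw [schurQSeries, map_prod, ← prod_mul_distrib]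
  refine prod_eq_one fun i _ => ?_
  rw [rescale_rescale, mul_comm (X i), ← rescale_rescale, ← map_mul,
    schurQFactor_mul_rescale_neg_one, map_one]

theorem derivative_schurQSeries :
    d⁄dX _ (schurQSeries σ R) =
      schurQSeries σ R * ∑ i, PowerSeries.C (X i) * rescale (X i) logDerivSchurQFactor :=
  Derivation.leibniz_prod_of_eq_mul _ _ fun i _ => by
    rw [derivative_rescale, derivative_schurQFactor, map_mul]
    ring

theorem coeff_sum_C_X_mul_rescale_logDerivSchurQFactor (k : ℕ) :
    PowerSeries.coeff k
        (∑ i, PowerSeries.C (X i : MvPolynomial σ R) * rescale (X i) logDerivSchurQFactor) =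
      if Even k then 2 * psum σ R (k + 1) else 0 := by
  simp_rw [map_sum, PowerSeries.coeff_C_mul, PowerSeries.coeff_rescale, logDerivSchurQFactor,
    PowerSeries.coeff_mk, psum, mul_sum]
  split_ifs
  · exact sum_congr rfl fun i _ => by ring
  · simp

variable [DecidableEq σ]

variable (σ R) in
/-- The one-row Schur Q-function: `Qₖ = 2 Pₖ` for `k ≥ 1`. -/
noncomputable def schurQ (k : ℕ) : MvPolynomial σ R :=
  ∑ j ∈ range (k + 1), esymm σ R j * hsymm σ R (k - j)

theorem schurQ_zero : schurQ σ R 0 = 1 := by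
  simp [schurQ]

theorem coeff_schurQSeries (k : ℕ) : PowerSeries.coeff k (schurQSeries σ R) = schurQ σ R k := by
  simp_rw [schurQSeries, schurQFactor, map_mul, map_add, map_one, rescale_X, prod_mul_distrib,
    PowerSeries.coeff_mul, Nat.sum_antidiagonal_eq_sum_range_succ_mk, coeff_prod_one_add_C_mul_X,
    PowerSeries.coeff_prod, PowerSeries.coeff_rescale, PowerSeries.coeff_mk, Pi.one_apply,
    mul_one, ← hsymm_eq_sum_finsuppAntidiag]
  rfl

theorem sum_range_neg_one_pow_mul_schurQ {k : ℕ} (hk : k ≠ 0) :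
    ∑ i ∈ range (k + 1), (-1) ^ (k - i) * schurQ σ R i * schurQ σ R (k - i) = 0 := by
  have h := congrArg (PowerSeries.coeff k) (schurQSeries_mul_rescale_neg_one (σ := σ) (R := R))
  rw [PowerSeries.coeff_mul, PowerSeries.coeff_one, if_neg hk,
    Nat.sum_antidiagonal_eq_sum_range_succ_mk] at h
  rw [← h]
  refine sum_congr rfl fun i _ => ?_
  rw [PowerSeries.coeff_rescale, coeff_schurQSeries, coeff_schurQSeries]
  ring

theorem natCast_mul_schurQ_succ (k : ℕ) :
    ((k + 1 : ℕ) : MvPolynomial σ R) * schurQ σ R (k + 1) =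
      ∑ i ∈ range (k + 1),
        schurQ σ R i * if Even (k - i) then 2 * psum σ R (k - i + 1) else 0 := by
  have h := congrArg (PowerSeries.coeff k) (derivative_schurQSeries (σ := σ) (R := R))
  rw [PowerSeries.coeff_derivative, PowerSeries.coeff_mul,
    Nat.sum_antidiagonal_eq_sum_range_succ_mk] at h
  simp_rw [coeff_schurQSeries, coeff_sum_C_X_mul_rescale_logDerivSchurQFactor] at h
  rw [← h]
  push_cast
  ring

end Series

section Subalgebra

variable {σ K : Type*} [Fintype σ] [Field K] {S : Subalgebra K (MvPolynomial σ K)} {N : ℕ}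

theorem ite_even_two_mul_psum_mem {j : ℕ} (h : Even j → psum σ K (j + 1) ∈ S) :
    (if Even j then 2 * psum σ K (j + 1) else 0) ∈ S := by
  split_ifs with hj
  · exact S.mul_mem (S.natCast_mem 2) (h hj)
  · exact S.zero_mem

variable [DecidableEq σ] [CharZero K]

theorem schurQ_mem_of_odd (h : ∀ k, Odd k → k ≤ N → schurQ σ K k ∈ S) :
    ∀ k ≤ N, schurQ σ K k ∈ S := by
  intro k
  induction k using Nat.strong_induction_on with
  | _ k ih =>
  intro hkN
  rcases Nat.even_or_odd k with hk | hk
  · rcases k with _ | k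
    · rw [schurQ_zero]
      exact S.one_mem
    have h := sum_range_neg_one_pow_mul_schurQ (σ := σ) (R := K) k.add_one_ne_zero
    rw [sum_range_succ, sum_range_succ'] at h
    simp only [Nat.add_sub_add_right, Nat.sub_self, Nat.sub_zero, pow_zero, hk.neg_one_pow,
      schurQ_zero, one_mul, mul_one] at h
    refine S.mem_of_natCast_mul_mem two_ne_zero ?_
    rw [show ((2 : ℕ) : MvPolynomial σ K) * schurQ σ K (k + 1) =
        -∑ i ∈ range k, (-1) ^ (k - i) * schurQ σ K (i + 1) * schurQ σ K (k - i) by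
      push_cast
      linear_combination h]
    refine S.neg_mem (S.sum_mem fun i hi => ?_)
    have hik := mem_range.1 hi
    exact S.mul_mem (S.mul_mem (S.pow_mem (S.neg_mem S.one_mem) _) (ih _ (by omega) (by omega)))
      (ih _ (by omega) (by omega))
  · exact h k hk hkN

theorem psum_mem_of_schurQ_mem (h : ∀ k ≤ N, schurQ σ K k ∈ S) :
    ∀ k, Odd k → k ≤ N → psum σ K k ∈ S := by
  intro k
  induction k using Nat.strong_induction_on with
  | _ k ih =>
  intro hk hkN
  obtain ⟨k, rfl⟩ : ∃ j, k = j + 1 := ⟨k - 1, by have := hk.pos; omega⟩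
  have hk : Even k := by simpa [Nat.odd_add_one] using hk
  have hA := natCast_mul_schurQ_succ (σ := σ) (R := K) k
  rw [sum_range_succ'] at hA
  simp only [Nat.sub_zero, schurQ_zero, one_mul, if_pos hk] at hA
  refine S.mem_of_natCast_mul_mem two_ne_zero ?_
  rw [show ((2 : ℕ) : MvPolynomial σ K) * psum σ K (k + 1) =
      ((k + 1 : ℕ) : MvPolynomial σ K) * schurQ σ K (k + 1) - ∑ i ∈ range k, schurQ σ K (i + 1) *
        (if Even (k - (i + 1)) then 2 * psum σ K (k - (i + 1) + 1) else 0) by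
    push_cast at hA ⊢
    linear_combination -hA]
  refine S.sub_mem (S.mul_mem (S.natCast_mem _) (h _ hkN)) (S.sum_mem fun i hi => ?_)
  have hik := mem_range.1 hi
  exact S.mul_mem (h _ (by omega))
    (ite_even_two_mul_psum_mem fun hev => ih _ (by omega) hev.add_one (by omega))

theorem schurQ_mem_of_psum_mem (h : ∀ k, Odd k → k ≤ N → psum σ K k ∈ S) :
    ∀ k ≤ N, schurQ σ K k ∈ S := by
  intro k
  induction k using Nat.strong_induction_on with
  | _ k ih =>
  intro hkN
  rcases k with _ | k
  · rw [schurQ_zero]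
    exact S.one_mem
  refine S.mem_of_natCast_mul_mem k.add_one_ne_zero ?_
  rw [natCast_mul_schurQ_succ]
  refine S.sum_mem fun i hi => ?_
  have hik := mem_range.1 hi
  exact S.mul_mem (ih _ (by omega) (by omega))
    (ite_even_two_mul_psum_mem fun hev => h _ hev.add_one (by omega))

end Subalgebra

end MvPolynomial

theorem stmt_5_general (m n : ℕ) :
    Algebra.adjoin ℚ
      {q : MvPolynomial (Fin n) ℚ |
        ∃ k, Odd k ∧ 1 ≤ k ∧ k ≤ 2 * m - 1 ∧
          q = C (1/2 : ℚ) * ∑ j ∈ Finset.range (k + 1),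
                esymm (Fin n) ℚ j * hsymm (Fin n) ℚ (k - j)} =
    Algebra.adjoin ℚ
      {q : MvPolynomial (Fin n) ℚ |
        ∃ k, Odd k ∧ 1 ≤ k ∧ k ≤ 2 * m - 1 ∧ q = psum (Fin n) ℚ k} := by
  apply le_antisymm <;> refine Algebra.adjoin_le ?_
  · rintro _ ⟨k, -, -, hk, rfl⟩
    rw [← MvPolynomial.smul_eq_C_mul]
    refine Subalgebra.smul_mem _ (schurQ_mem_of_psum_mem (fun j hj hjN => ?_) k hk) _
    exact Algebra.subset_adjoin ⟨j, hj, hj.pos, hjN, rfl⟩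
  · rintro _ ⟨k, hk, -, hkN, rfl⟩
    refine psum_mem_of_schurQ_mem (schurQ_mem_of_odd fun j hj hjN => ?_) k hk hkN
    have hQP : schurQ (Fin n) ℚ j = (2 : ℚ) • (C (1 / 2) * schurQ (Fin n) ℚ j) := by
      rw [MvPolynomial.smul_eq_C_mul, ← mul_assoc, ← C_mul]
      norm_num
    rw [hQP]
    refine Subalgebra.smul_mem _ (Algebra.subset_adjoin ?_) _
    exact ⟨j, hj, hj.pos, hjN, rfl⟩

/-- For every `m ≥ 1` and `n ≥ 1`, the `ℚ`-subalgebra of `MvPolynomial (Fin n) ℚ` generated by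
the one-row Schur P-functions `P_1, P_3, …, P_{2m-1}`, where
`P_i = (1/2) * ∑_{j=0}^{i} e_j * h_{i-j}`, equals the `ℚ`-subalgebra generated by the odd power
sums `p_1, p_3, …, p_{2m-1}`. -/
theorem stmt_5 (m n : ℕ) (hm : 1 ≤ m) (hn : 1 ≤ n) :
    Algebra.adjoin ℚ
      {q : MvPolynomial (Fin n) ℚ |
        ∃ k, Odd k ∧ 1 ≤ k ∧ k ≤ 2 * m - 1 ∧
          q = C (1/2 : ℚ) * ∑ j ∈ Finset.range (k + 1),
                esymm (Fin n) ℚ j * hsymm (Fin n) ℚ (k - j)} =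
    Algebra.adjoin ℚ
      {q : MvPolynomial (Fin n) ℚ |
        ∃ k, Odd k ∧ 1 ≤ k ∧ k ≤ 2 * m - 1 ∧ q = psum (Fin n) ℚ k} :=
  stmt_5_general m n
end
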